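/- If hereditary substitution into a neutral term returns a normal term with a type approximation, that approximation is a subexpression of the approximation of the substituted variable: if [N/x]_α(R) = M' : β then β ≤ α. -/

import Mathlib

/-- Simple type approximations: `α ::= a | α ⇒ β`. -/
inductive STy : Type where
  | atom : ℕ → STy
  | arr : STy → STy → STy
deriving DecidableEq

mutual
/-- β-normal terms: `M ::= R | λx.M`. -/
inductive Nf : Type where
  | ne : Neu → Nf
  | lam : ℕ → Nf → Nf
deriving DecidableEq

/-- Neutral terms: `R ::= x | c | R M`. -/
inductive Neu : Type where
  | var : ℕ → Neu
  | const : ℕ → Neu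
  | app : Neu → Nf → Neu
deriving DecidableEq
end

/-- `SubApx β α`: `β` occurs as a (not necessarily proper) subexpression of `α`. -/
inductive SubApx : STy → STy → Prop where
  | refl : ∀ {α}, SubApx α α
  | arrL : ∀ {δ α β}, SubApx δ α → SubApx δ (.arr α β)
  | arrR : ∀ {δ α β}, SubApx δ β → SubApx δ (.arr α β)

mutual
/-- Hereditary substitution `[N/x]_α(M) = M'` into normal terms. -/
inductive HNf : Nf → ℕ → STy → Nf → Nf → Prop where
  | lam : ∀ {N x α y M M'}, y ≠ x → HNf N x α M M' →
      HNf N x α (.lam y M) (.lam y M')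
  | neNe : ∀ {N x α R R'}, HNe N x α R (Sum.inl R') →
      HNf N x α (.ne R) (.ne R')
  | neNf : ∀ {N x α R M β}, HNe N x α R (Sum.inr (M, β)) →
      HNf N x α (.ne R) M

/-- Hereditary substitution `[N/x]_α(R)` into neutral terms, returning either
a neutral term or a normal term with a type approximation. -/
inductive HNe : Nf → ℕ → STy → Neu → (Neu ⊕ Nf × STy) → Prop where
  | varHit : ∀ {N x α}, HNe N x α (.var x) (Sum.inr (N, α))
  | varMiss : ∀ {N x α y}, y ≠ x → HNe N x α (.var y) (Sum.inl (.var y))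
  | const : ∀ {N x α c}, HNe N x α (.const c) (Sum.inl (.const c))
  | appNe : ∀ {N x α R R' M M'}, HNe N x α R (Sum.inl R') → HNf N x α M M' →
      HNe N x α (.app R M) (Sum.inl (.app R' M'))
  | appBeta : ∀ {N x α R y M' γ β M₀ M₀' M''},
      HNe N x α R (Sum.inr (.lam y M', .arr γ β)) →
      HNf N x α M₀ M₀' →
      HNf M₀' y γ M' M'' →
      HNe N x α (.app R M₀) (Sum.inr (M'', β))
end

theorem SubApx.trans {γ β α : STy} (h₁ : SubApx γ β) (h₂ : SubApx β α) : SubApx γ α := by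
  induction h₂ with
  | refl => exact h₁
  | arrL _ ih => exact .arrL ih
  | arrR _ ih => exact .arrR ih

/-- If hereditary substitution into a neutral term returns a normal term with
a type approximation, that approximation is a subexpression of the
approximation of the substituted variable. -/
theorem hsub_apx_le (N : Nf) (x : ℕ) (α : STy) (R : Neu) (M' : Nf) (β : STy)
    (h : HNe N x α R (Sum.inr (M', β))) : SubApx β α :=
  match h with
  | .varHit => .refl
  -- The result type `β` of a β-redex is the codomain of the head's approximation `γ ⇒ β ≤ α`.
  | .appBeta hR _ _ => (SubApx.arrR .refl).trans (hsub_apx_le _ _ _ _ _ _ hR)
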